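/- Let q : Q → ℙ¹ be a quadric fibration with a sub-ℙ¹×ℙ¹ boundary: suppose D_h ≅ F₀, D_f a fiber, −K_Q ∼ 2D_h + aD_f, with the adjunction D_h|_{D_h} ∼ −K_{D_h} − a·D_f|_{D_h}. Then D_h³ = 8 − 4a and (−K_Q)³ = 64 − 8a; in particular if (−K_Q)³ = 40 then a = 3 and −K_Q ∼ 2D_h + 3D_f. -/

import Mathlib

/-! By adjunction `D_h|_{D_h} = −K_{D_h} − a f`, so on `D_h ≅ ℙ¹ × ℙ¹` one reads off
`D_h³ = (K_{D_h} + a f)² = 8 − 4a` and `D_h²·D_f = −K_{D_h}·f = 2`. Expanding `(2D_h + aD_f)³`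
with `D_f² = 0` gives `8(8 − 4a) + 12a·2 = 64 − 8a`. -/

/-- An abstract model of the relevant intersection theory on a quadric fibration
`q : Q → ℙ¹` with a fiber `D_f` and a divisor `D_h ≅ ℙ¹ × ℙ¹`: the group `Div` of
divisor classes on `Q` (so linear equivalence is equality), the group `SDiv` of
divisor classes on the surface `D_h` with its intersection pairing `dot`, the triple
intersection form `inter` on `Q`, the restriction map to `D_h`, and the canonical
classes.  The hypothesis fields record the geometric input listed in the statement:
`D_f` is a fiber (`D_f² ≡ 0`), adjunction `D_h|_{D_h} ∼ −K_{D_h} − a·D_f|_{D_h}`,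
`−K_Q ∼ 2D_h + aD_f`, the intersection numbers `K_{D_h}² = 8`,
`(K_{D_h}·D_f|_{D_h}) = −2`, `(D_f|_{D_h})² = 0` on `D_h ≅ ℙ¹×ℙ¹`, and the
compatibility `(A·B·D_h)_Q = (A|_{D_h} · B|_{D_h})_{D_h}`. -/
structure Setup where
  /-- divisor classes on the 3-fold `Q` -/
  Div : AddCommGrpCat
  /-- divisor classes on the surface `D_h` -/
  SDiv : AddCommGrpCat
  /-- the triple intersection form on `Q` -/
  inter : Div →+ Div →+ Div →+ ℤ
  /-- the intersection pairing on `D_h` -/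
  dot : SDiv →+ SDiv →+ ℤ
  /-- restriction of divisors to `D_h` -/
  restrict : Div →+ SDiv
  /-- the class of `D_h` -/
  Dh : Div
  /-- the class of the fiber `D_f` -/
  Df : Div
  /-- the canonical class `K_Q` -/
  K : Div
  /-- the canonical class `K_{D_h}` of `D_h ≅ ℙ¹ × ℙ¹` -/
  KDh : SDiv
  a : ℤ
  /-- symmetry of the intersection form -/
  inter_comm : ∀ A B C : Div, inter A B C = inter B A C ∧ inter A B C = inter A C B
  /-- `−K_Q ∼ 2D_h + a·D_f` -/
  hK : -K = (2 : ℤ) • Dh + a • Df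
  /-- adjunction: `D_h|_{D_h} ∼ −K_{D_h} − a·D_f|_{D_h}` -/
  hadj : restrict Dh = -KDh - a • restrict Df
  /-- `K_{D_h}² = 8` on `D_h ≅ ℙ¹ × ℙ¹` -/
  hKK : dot KDh KDh = 8
  /-- `(K_{D_h} · D_f|_{D_h}) = −2` since `D_f|_{D_h} ∼ f₀` -/
  hKf : dot KDh (restrict Df) = -2
  /-- `(D_f|_{D_h})² = 0` -/
  hff : dot (restrict Df) (restrict Df) = 0
  /-- compatibility: `(A · B · D_h)_Q = (A|_{D_h} · B|_{D_h})_{D_h}` -/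
  hcompat : ∀ A B : Div, inter A B Dh = dot (restrict A) (restrict B)
  /-- `D_f` is a fiber: `(D_f · D_f · A) = 0` for every `A` -/
  hfiber : ∀ A : Div, inter Df Df A = 0

theorem trilinear_cube_add {M : Type*} [AddCommGroup M] (f : M →+ M →+ M →+ ℤ)
    (h₁₂ : ∀ A B C, f A B C = f B A C) (h₂₃ : ∀ A B C, f A B C = f A C B) (x y : ℤ) (A B : M) :
    f (x • A + y • B) (x • A + y • B) (x • A + y • B) =
      x ^ 3 * f A A A + 3 * x ^ 2 * y * f A A B + 3 * x * y ^ 2 * f A B B + y ^ 3 * f B B B := by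
  have hABA : f A B A = f A A B := h₂₃ A B A
  have hBAA : f B A A = f A A B := by rw [← h₁₂, hABA]
  have hBAB : f B A B = f A B B := (h₁₂ A B B).symm
  have hBBA : f B B A = f A B B := by rw [h₂₃, hBAB]
  simp only [map_add, map_zsmul, AddMonoidHom.add_apply, AddMonoidHom.smul_apply, smul_eq_mul,
    hABA, hBAA, hBAB, hBBA]
  ring

namespace Setup

variable (S : Setup)

theorem inter_comm₁₂ (A B C : S.Div) : S.inter A B C = S.inter B A C := (S.inter_comm A B C).1

theorem inter_comm₂₃ (A B C : S.Div) : S.inter A B C = S.inter A C B := (S.inter_comm A B C).2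

theorem dot_restrict_comm (A B : S.Div) :
    S.dot (S.restrict A) (S.restrict B) = S.dot (S.restrict B) (S.restrict A) := by
  rw [← S.hcompat, S.inter_comm₁₂, S.hcompat]

/-- `dot` is only known to be symmetric on restricted classes (via `inter`), and this puts
`K_{D_h}` among them. -/
theorem KDh_eq_restrict : S.KDh = S.restrict (-S.Dh - S.a • S.Df) := by
  rw [map_sub, map_neg, map_zsmul, S.hadj]
  abel

theorem dot_restrict_Df_KDh : S.dot (S.restrict S.Df) S.KDh = -2 := by
  rw [S.KDh_eq_restrict, S.dot_restrict_comm, ← S.KDh_eq_restrict, S.hKf]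

theorem inter_Dh_Dh_Dh : S.inter S.Dh S.Dh S.Dh = 8 - 4 * S.a := by
  rw [S.hcompat, S.hadj]
  simp only [map_sub, map_neg, map_zsmul, AddMonoidHom.sub_apply, AddMonoidHom.neg_apply,
    AddMonoidHom.smul_apply, smul_eq_mul, S.hKK, S.hKf, S.dot_restrict_Df_KDh, S.hff]
  ring

theorem inter_Dh_Dh_Df : S.inter S.Dh S.Dh S.Df = 2 := by
  rw [S.inter_comm₂₃, S.hcompat, S.hadj]
  simp only [map_sub, map_neg, map_zsmul, AddMonoidHom.sub_apply, AddMonoidHom.neg_apply,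
    AddMonoidHom.smul_apply, smul_eq_mul, S.hKf, S.hff]
  ring

theorem inter_Dh_Df_Df : S.inter S.Dh S.Df S.Df = 0 := by
  rw [S.inter_comm₁₂, S.inter_comm₂₃, S.hfiber]

theorem inter_neg_K_cube : S.inter (-S.K) (-S.K) (-S.K) = 64 - 8 * S.a := by
  rw [S.hK, trilinear_cube_add S.inter S.inter_comm₁₂ S.inter_comm₂₃, S.inter_Dh_Dh_Dh,
    S.inter_Dh_Dh_Df, S.inter_Dh_Df_Df, S.hfiber]
  ring

end Setup

/-- With the above data: `D_h³ = 8 − 4a` and `(−K_Q)³ = 64 − 8a`; in particular, if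
`(−K_Q)³ = 40` then `a = 3` and `−K_Q ∼ 2D_h + 3D_f`. -/
theorem stmt16 (S : Setup) :
    S.inter S.Dh S.Dh S.Dh = 8 - 4 * S.a ∧
    S.inter (-S.K) (-S.K) (-S.K) = 64 - 8 * S.a ∧
    (S.inter (-S.K) (-S.K) (-S.K) = 40 →
      S.a = 3 ∧ -S.K = (2 : ℤ) • S.Dh + (3 : ℤ) • S.Df) := by
  refine ⟨S.inter_Dh_Dh_Dh, S.inter_neg_K_cube, fun h40 => ?_⟩
  have ha : S.a = 3 := by linarith [S.inter_neg_K_cube]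
  exact ⟨ha, ha ▸ S.hK⟩
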